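/- Let κ : [0,T] → ℝ with κ(t) > 0, σ : [0,T] → ℝ continuous, ρ : [0,T] → [-1,1], and ξ > 0. Suppose α_R, α_I : [0,T] → ℝ are C¹ with α_R satisfying α_R'(t) = (1/2)D(t) + κ(t)α_R(t) − (1/2)σ(t)²α_R(t)², α_R(T) = 0, where D(t) = ξ² + 2ρ(t)σ(t)ξ α_I(t) + σ(t)² α_I(t)². Then D(t) ≥ 0 for all t, and α_R(t) ≤ 0 for all t ∈ [0,T]. -/

import Mathlib

/-!
`D` is a quadratic form in `(ξ, σ α_I)` with cross coefficient `ρ ∈ [-1, 1]`, hence nonnegative.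
Where `α_R > 0` the terms `D / 2` and `κ α_R` of the Riccati equation are nonnegative and, with
`C` a bound for `σ² α_R` on `[0, T]`, `α_R' ≥ -(C / 2) α_R`; so `α_R e^{C t / 2}` cannot decrease
while `α_R` stays positive, and a positive value of `α_R` would persist up to `T`,
contradicting `α_R(T) = 0`.
-/

open Set

lemma sq_add_two_mul_mul_add_sq_nonneg {ρ : ℝ} (hρ : ρ ∈ Icc (-1 : ℝ) 1) (x y : ℝ) :
    0 ≤ x ^ 2 + 2 * ρ * x * y + y ^ 2 := by
  obtain ⟨hρ₁, hρ₂⟩ := hρ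
  nlinarith [sq_nonneg (x + ρ * y), mul_nonneg (mul_nonneg (sub_nonneg.2 hρ₂)
    (neg_le_iff_add_nonneg.1 hρ₁)) (sq_nonneg y)]

section Comparison

variable {f f' : ℝ → ℝ} {a b : ℝ}

lemma nonpos_of_deriv_nonneg_of_pos (hf : ContinuousOn f (Icc a b))
    (hf' : ∀ x ∈ Ioo a b, HasDerivAt f (f' x) x) (hb : f b ≤ 0)
    (hpos : ∀ x ∈ Ioo a b, 0 < f x → 0 ≤ f' x) : ∀ x ∈ Icc a b, f x ≤ 0 := by
  intro t ht
  by_contra! hft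
  set E := Icc t b ∩ f ⁻¹' Iic 0
  have hE : IsCompact E := isCompact_Icc.of_isClosed_subset
    ((hf.mono (Icc_subset_Icc_left ht.1)).preimage_isClosed_of_isClosed isClosed_Icc isClosed_Iic)
    inter_subset_left
  have hsE : sInf E ∈ E := hE.sInf_mem ⟨b, ⟨ht.2, le_rfl⟩, hb⟩
  obtain ⟨⟨hts, hsb⟩, hfs⟩ := hsE
  have hpos_before : ∀ x ∈ Ico t (sInf E), 0 < f x := fun x hx ↦ by
    by_contra! hfx
    exact hx.2.not_ge (csInf_le hE.bddBelow ⟨⟨hx.1, hx.2.le.trans hsb⟩, hfx⟩)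
  have hmono : MonotoneOn f (Icc t (sInf E)) := by
    have hsub : Ioo t (sInf E) ⊆ Ioo a b := Ioo_subset_Ioo ht.1 hsb
    refine monotoneOn_of_hasDerivWithinAt_nonneg (convex_Icc _ _)
      (hf.mono (Icc_subset_Icc ht.1 hsb)) (f' := f') ?_ ?_ <;> rw [interior_Icc]
    · exact fun x hx ↦ (hf' x (hsub hx)).hasDerivWithinAt
    · exact fun x hx ↦ hpos x (hsub hx) (hpos_before x (Ioo_subset_Ico_self hx))
  exact hft.not_ge ((hmono ⟨le_rfl, hts⟩ ⟨hts, le_rfl⟩ hts).trans hfs)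

lemma nonpos_of_neg_mul_le_deriv_of_pos (C : ℝ) (hf : ContinuousOn f (Icc a b))
    (hf' : ∀ x ∈ Ioo a b, HasDerivAt f (f' x) x) (hb : f b ≤ 0)
    (hpos : ∀ x ∈ Ioo a b, 0 < f x → -(C * f x) ≤ f' x) : ∀ x ∈ Icc a b, f x ≤ 0 := by
  have hexp (x : ℝ) : HasDerivAt (fun t ↦ Real.exp (C * t)) (Real.exp (C * x) * C) x := by
    simpa using ((hasDerivAt_id x).const_mul C).exp
  have key := nonpos_of_deriv_nonneg_of_pos (f := fun t ↦ f t * Real.exp (C * t))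
    (f' := fun x ↦ (f' x + C * f x) * Real.exp (C * x))
    (hf.mul (by fun_prop))
    (fun x hx ↦ ((hf' x hx).mul (hexp x)).congr_deriv (by ring))
    (mul_nonpos_of_nonpos_of_nonneg hb (Real.exp_pos _).le)
    (fun x hx hfx ↦ mul_nonneg
      (by linarith [hpos x hx (pos_of_mul_pos_left hfx (Real.exp_pos _).le)]) (Real.exp_pos _).le)
  exact fun x hx ↦ nonpos_of_mul_nonpos_left (key x hx) (Real.exp_pos _)

end Comparison

theorem stmt_9_general (T : ℝ) (κ σ ρ αR αI : ℝ → ℝ) (ξ : ℝ)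
    (hκ : ∀ t ∈ Set.Icc (0 : ℝ) T, 0 < κ t)
    (hσ : ContinuousOn σ (Set.Icc (0 : ℝ) T))
    (hρ : ∀ t ∈ Set.Icc (0 : ℝ) T, ρ t ∈ Set.Icc (-1 : ℝ) 1)
    (D : ℝ → ℝ)
    (hD : ∀ t, D t = ξ ^ 2 + 2 * ρ t * σ t * ξ * αI t + (σ t) ^ 2 * (αI t) ^ 2)
    (hαR : ∀ t ∈ Set.Icc (0 : ℝ) T,
      HasDerivAt αR ((1 / 2) * D t + κ t * αR t - (1 / 2) * (σ t) ^ 2 * (αR t) ^ 2) t)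
    (hαRT : αR T = 0) :
    (∀ t ∈ Set.Icc (0 : ℝ) T, 0 ≤ D t) ∧ ∀ t ∈ Set.Icc (0 : ℝ) T, αR t ≤ 0 := by
  have hD_nonneg : ∀ t ∈ Icc 0 T, 0 ≤ D t := fun t ht ↦ by
    simpa only [hD, mul_pow, mul_assoc, mul_left_comm] using
      sq_add_two_mul_mul_add_sq_nonneg (hρ t ht) ξ (σ t * αI t)
  have hαR_cont : ContinuousOn αR (Icc 0 T) := fun t ht ↦ (hαR t ht).continuousAt.continuousWithinAt
  obtain ⟨C, hC⟩ := isCompact_Icc.exists_bound_of_continuousOn ((hσ.pow 2).mul hαR_cont)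
  refine ⟨hD_nonneg, nonpos_of_neg_mul_le_deriv_of_pos (C / 2) hαR_cont
    (fun t ht ↦ hαR t (Ioo_subset_Icc_self ht)) hαRT.le fun t ht hαRt ↦ ?_⟩
  have htT := Ioo_subset_Icc_self ht
  have hbound : σ t ^ 2 * αR t ≤ C := (le_abs_self _).trans (hC t htT)
  nlinarith [hD_nonneg t htT, mul_pos (hκ t htT) hαRt, mul_le_mul_of_nonneg_right hbound hαRt.le]

/-- For the real part `α_R` of the solution of the complex Heston Riccati equation with
`√p = −iξ`: `α_R' = (1/2)D + κ α_R − (1/2)σ²α_R²`, `α_R(T) = 0`, where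
`D = ξ² + 2ρσξα_I + σ²α_I²`.  Then `D(t) ≥ 0` on `[0,T]` and `α_R(t) ≤ 0` on `[0,T]`. -/
theorem stmt_9 (T : ℝ) (hT : 0 < T) (κ σ ρ αR αI : ℝ → ℝ) (ξ : ℝ) (hξ : 0 < ξ)
    (hκ : ∀ t ∈ Set.Icc (0 : ℝ) T, 0 < κ t)
    (hσ : ContinuousOn σ (Set.Icc (0 : ℝ) T))
    (hρ : ∀ t ∈ Set.Icc (0 : ℝ) T, ρ t ∈ Set.Icc (-1 : ℝ) 1)
    (hαI : ContinuousOn αI (Set.Icc (0 : ℝ) T))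
    (D : ℝ → ℝ)
    (hD : ∀ t, D t = ξ ^ 2 + 2 * ρ t * σ t * ξ * αI t + (σ t) ^ 2 * (αI t) ^ 2)
    (hαR : ∀ t ∈ Set.Icc (0 : ℝ) T,
      HasDerivAt αR ((1 / 2) * D t + κ t * αR t - (1 / 2) * (σ t) ^ 2 * (αR t) ^ 2) t)
    (hC1 : ContinuousOn (deriv αR) (Set.Icc (0 : ℝ) T))
    (hαRT : αR T = 0) :
    (∀ t ∈ Set.Icc (0 : ℝ) T, 0 ≤ D t) ∧ ∀ t ∈ Set.Icc (0 : ℝ) T, αR t ≤ 0 :=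
  stmt_9_general T κ σ ρ αR αI ξ hκ hσ hρ D hD hαR hαRT
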